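/- Let A and B be n×n complex matrices such that j(A - A*) is positive semidefinite and j(B - B*) is positive definite (where A* denotes conjugate transpose). Then det(I - AB) ≠ 0. -/

import Mathlib

/-!
If `(1 - AB) x = 0` with `x ≠ 0`, put `y = Bx`, so that `Ay = x`. Then
`y* A y = y* x` is the conjugate of `x* B x`. Since `j(M - M*)` has quadratic form
`v ↦ -2 Im(v* M v)`, the hypotheses give `Im(y* A y) ≤ 0` and `Im(x* B x) < 0`,
which contradict `Im(y* A y) = -Im(x* B x)`.
-/

open Matrix
open scoped ComplexOrder

namespace Matrix

variable {n : Type*} [Fintype n]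

theorem star_dotProduct_I_smul_sub_conjTranspose_mulVec (M : Matrix n n ℂ) (v : n → ℂ) :
    star v ⬝ᵥ (Complex.I • (M - Mᴴ)) *ᵥ v = ((-2 * (star v ⬝ᵥ M *ᵥ v).im : ℝ) : ℂ) := by
  have hconj : star v ⬝ᵥ Mᴴ *ᵥ v = star (star v ⬝ᵥ M *ᵥ v) := by
    rw [star_dotProduct, star_mulVec, conjTranspose_conjTranspose, ← dotProduct_mulVec]
  rw [smul_mulVec, dotProduct_smul, sub_mulVec, dotProduct_sub, hconj, smul_eq_mul]
  refine Complex.ext ?_ (by simp)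
  simp only [Complex.mul_re, Complex.I_re, Complex.I_im, Complex.sub_re, Complex.sub_im,
    Complex.star_def, Complex.conj_re, Complex.conj_im, Complex.ofReal_re]
  ring

theorem PosSemidef.im_star_dotProduct_mulVec_nonpos {M : Matrix n n ℂ}
    (hM : (Complex.I • (M - Mᴴ)).PosSemidef) (v : n → ℂ) :
    (star v ⬝ᵥ M *ᵥ v).im ≤ 0 := by
  have h := hM.dotProduct_mulVec_nonneg v
  rw [star_dotProduct_I_smul_sub_conjTranspose_mulVec, Complex.zero_le_real] at h
  linarith

theorem PosDef.im_star_dotProduct_mulVec_neg {M : Matrix n n ℂ}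
    (hM : (Complex.I • (M - Mᴴ)).PosDef) {v : n → ℂ} (hv : v ≠ 0) :
    (star v ⬝ᵥ M *ᵥ v).im < 0 := by
  have h := hM.dotProduct_mulVec_pos hv
  rw [star_dotProduct_I_smul_sub_conjTranspose_mulVec, Complex.zero_lt_real] at h
  linarith

end Matrix

/-- If j(A - A*) is positive semidefinite and j(B - B*) is positive definite
for complex n×n matrices A, B, then det(I - AB) ≠ 0. -/
theorem stmt_0 {n : Type*} [Fintype n] [DecidableEq n]
    (A B : Matrix n n ℂ)
    (hA : (Complex.I • (A - Aᴴ)).PosSemidef)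
    (hB : (Complex.I • (B - Bᴴ)).PosDef) :
    (1 - A * B).det ≠ 0 := by
  intro hdet
  obtain ⟨x, hx, hABx⟩ := exists_mulVec_eq_zero_iff.2 hdet
  have hAy : A *ᵥ (B *ᵥ x) = x := by
    rwa [sub_mulVec, one_mulVec, sub_eq_zero, ← mulVec_mulVec, eq_comm] at hABx
  have hform : star (B *ᵥ x) ⬝ᵥ A *ᵥ (B *ᵥ x) = star (star x ⬝ᵥ B *ᵥ x) := by
    rw [hAy, star_dotProduct]
  have him := congrArg Complex.im hform
  rw [Complex.star_def, Complex.conj_im] at him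
  have hAim := hA.im_star_dotProduct_mulVec_nonpos (B *ᵥ x)
  have hBim := hB.im_star_dotProduct_mulVec_neg hx
  linarith
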